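/- For the Besse ellipsoid $E(a)$ with common period $\tau$ (a multiple of the minimal common period $\tau_0=\mathrm{lcm}(a_1,\dots,a_n)$), every $\tau$-periodic Reeb orbit has Conley--Zehnder index $\mu=2(\tau/a_1+\cdots+\tau/a_n)-n$, and setting $i=(\mu-n)/2$ one has $i=\sum_{h=1}^n(\tau/a_h-1)$ and $\tau=c_i(\Sigma)=c_{i+n-1}(\Sigma)$, where $c_{i-1}(\Sigma)$ is the $i$-th element of the non-decreasing list of all positive multiples of $a_1,\dots,a_n$ with multiplicity. -/

import Mathlib

open scoped BigOperators

/-! Since `τ = K_h a_h`, the multiples `k a_h` below `τ` are those with `1 ≤ k ≤ K_h - 1`, and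
`τ` itself is attained exactly once for each `h`. Counting fibrewise over `h` gives
`∑_h (K_h - 1) = i` values below `τ` and `i + n` values at most `τ`. -/

theorem Nat.card_pos_le_eq_sum {ι : Type*} [Fintype ι] (K : ι → ℕ) :
    Nat.card {p : ℕ × ι // 0 < p.1 ∧ p.1 ≤ K p.2} = ∑ h, K h := by
  let e : {p : ℕ × ι // 0 < p.1 ∧ p.1 ≤ K p.2} ≃ Σ h, Set.Icc 1 (K h) :=
    ((Equiv.prodComm ℕ ι).subtypeEquiv fun _ => Iff.rfl).trans
      (Equiv.subtypeProdEquivSigmaSubtype fun h k => 1 ≤ k ∧ k ≤ K h)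
  rw [Nat.card_congr e, Nat.card_sigma]
  simp

theorem besse_ellipsoid_spectral_coincidence_general (n : ℕ)
    (a : Fin n → ℝ) (ha : ∀ h, 0 < a h)
    (τ : ℝ) (K : Fin n → ℕ)
    (hK : ∀ h, 0 < K h ∧ τ = (K h : ℝ) * a h)
    (μ : ℤ) (hμ : μ = 2 * (∑ h : Fin n, (K h : ℤ)) - n)
    (i : ℤ) (hi : i = (μ - n) / 2) :
    i = ∑ h : Fin n, ((K h : ℤ) - 1) ∧
    0 ≤ i ∧
    (Nat.card {p : ℕ × Fin n // 0 < p.1 ∧ (p.1 : ℝ) * a p.2 < τ} : ℤ) = i ∧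
    (Nat.card {p : ℕ × Fin n // 0 < p.1 ∧ (p.1 : ℝ) * a p.2 ≤ τ} : ℤ) = i + n := by
  have hi_sum : i = ∑ h, ((K h : ℤ) - 1) := by
    rw [Finset.sum_sub_distrib]
    simp only [Finset.sum_const, Finset.card_univ, Fintype.card_fin, nsmul_eq_mul, mul_one]
    omega
  have hlt : ∀ p : ℕ × Fin n,
      (0 < p.1 ∧ (p.1 : ℝ) * a p.2 < τ) ↔ (0 < p.1 ∧ p.1 ≤ K p.2 - 1) := fun ⟨k, h⟩ => by
    rw [(hK h).2, mul_lt_mul_iff_left₀ (ha h), Nat.cast_lt, Nat.lt_iff_le_pred (hK h).1]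
  have hle : ∀ p : ℕ × Fin n,
      (0 < p.1 ∧ (p.1 : ℝ) * a p.2 ≤ τ) ↔ (0 < p.1 ∧ p.1 ≤ K p.2) := fun ⟨k, h⟩ => by
    rw [(hK h).2, mul_le_mul_iff_left₀ (ha h), Nat.cast_le]
  have hK_pred : ∀ h, ((K h - 1 : ℕ) : ℤ) = K h - 1 := fun h => Nat.cast_pred (hK h).1
  have hcard_lt : (Nat.card {p : ℕ × Fin n // 0 < p.1 ∧ (p.1 : ℝ) * a p.2 < τ} : ℤ) = i := by
    rw [Nat.card_congr (Equiv.subtypeEquivRight hlt), Nat.card_pos_le_eq_sum (K · - 1), hi_sum]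
    push_cast [hK_pred]
    rfl
  have hcard_le : (Nat.card {p : ℕ × Fin n // 0 < p.1 ∧ (p.1 : ℝ) * a p.2 ≤ τ} : ℤ) = i + n := by
    rw [Nat.card_congr (Equiv.subtypeEquivRight hle), Nat.card_pos_le_eq_sum, hi_sum,
      Finset.sum_sub_distrib]
    simp
  refine ⟨hi_sum, hcard_lt ▸ Int.natCast_nonneg _, hcard_lt, hcard_le⟩

/-- **Spectral invariants of Besse ellipsoids at a common period.**
For the Besse ellipsoid `E(a)` (parameters `0 < a_1, …, a_n` with pairwise rational
ratios) and a common period `τ` of the Reeb flow (so `τ/a_h = K_h` is a positive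
integer for every `h`), every `τ`-periodic Reeb orbit has Conley–Zehnder index
`μ = 2(τ/a_1 + ⋯ + τ/a_n) - n`, and setting `i = (μ - n)/2` one has
`i = ∑_h (τ/a_h - 1)` and `τ = c_i(Σ) = c_{i+n-1}(Σ)`, where `c_{i-1}(Σ)` is the
`i`-th element of the non-decreasing list of all positive multiples of
`a_1, …, a_n` with multiplicity. The last equalities are expressed by the rank
characterization: exactly `i` elements of the multiset `{k a_h}` are `< τ` and
exactly `i + n` are `≤ τ`. -/
theorem besse_ellipsoid_spectral_coincidence (n : ℕ) (hn : 1 ≤ n)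
    (a : Fin n → ℝ) (ha : ∀ h, 0 < a h)
    (hrat : ∀ h h', ∃ q : ℚ, a h = (q : ℝ) * a h')
    (τ : ℝ) (K : Fin n → ℕ)
    (hK : ∀ h, 0 < K h ∧ τ = (K h : ℝ) * a h)
    (μ : ℤ) (hμ : μ = 2 * (∑ h : Fin n, (K h : ℤ)) - n)
    (i : ℤ) (hi : i = (μ - n) / 2) :
    i = ∑ h : Fin n, ((K h : ℤ) - 1) ∧
    0 ≤ i ∧
    (Nat.card {p : ℕ × Fin n // 0 < p.1 ∧ (p.1 : ℝ) * a p.2 < τ} : ℤ) = i ∧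
    (Nat.card {p : ℕ × Fin n // 0 < p.1 ∧ (p.1 : ℝ) * a p.2 ≤ τ} : ℤ) = i + n :=
  besse_ellipsoid_spectral_coincidence_general n a ha τ K hK μ hμ i hi
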